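/- Let m be a positive integer and let a_1, ..., a_m be distinct real numbers. Define Δ̄^{1/2} ∈ S^m by (Δ̄^{1/2})_{ij} = |a_i - a_j| for i ≠ j and 0 on the diagonal, and let μ₀ be the smallest eigenvalue of -(1/2) J_m Δ̄^{1/2} J_m, where J_m = I_m - (1/m)𝟏𝟏^T. If β ≥ -4μ₀, then the symmetric matrix Δ ∈ S^m defined by Δ_{ij} = (|a_i - a_j| + β)^2 for i ≠ j and Δ_{ii} = 0 is a Euclidean distance matrix: there exist an integer s ≥ 1 and points z_1, ..., z_m ∈ ℝ^s such that ‖z_i - z_j‖^2 = Δ_{ij} for all i, j. -/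

import Mathlib

open Matrix

/-- The centering matrix `J = I - (1/k) 𝟏𝟏ᵀ`. -/
noncomputable def centeringMatrix (k : ℕ) : Matrix (Fin k) (Fin k) ℝ :=
  1 - (k : ℝ)⁻¹ • Matrix.of (fun _ _ => (1 : ℝ))

/-- The double-centered matrix `B(C) = -(1/2) J C J`. -/
noncomputable def doubleCenter {k : ℕ} (C : Matrix (Fin k) (Fin k) ℝ) :
    Matrix (Fin k) (Fin k) ℝ :=
  (-(1/2) : ℝ) • (centeringMatrix k * C * centeringMatrix k)

/-- `Δ` is a (squared) Euclidean distance matrix: there are an integer `s ≥ 1` and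
points `z_1, …, z_m ∈ ℝ^s` with `Δ i j = ‖z i - z j‖²` for all `i, j`. -/
def IsEDM {m : ℕ} (Δ : Matrix (Fin m) (Fin m) ℝ) : Prop :=
  ∃ s : ℕ, 1 ≤ s ∧ ∃ z : Fin m → EuclideanSpace ℝ (Fin s),
    ∀ i j, Δ i j = ‖z i - z j‖ ^ 2

/-!
The centering matrix kills `𝟏`, so `-(1/2) J Δ̄^{1/2} J` is singular and `μ₀ ≤ 0`; hence
`β ≥ 0`. Off the diagonal, `(|x| + β)² = x² + 2β|x| + β²`, and each summand is a squared
distance matrix: of the points `a i` on the line, of the indicators `1_(l, a i]` in `L²(ℝ)`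
(whose squared distances are `|a i - a j|`), and of a scaled regular simplex. Euclidean
distance matrices are closed under sums and nonnegative multiples.
-/

open MeasureTheory

theorem isEDM_of_norm_sub_sq {E : Type*} [NormedAddCommGroup E] [InnerProductSpace ℝ E]
    {m : ℕ} {Δ : Matrix (Fin m) (Fin m) ℝ} (z : Fin m → E)
    (h : ∀ i j, Δ i j = ‖z i - z j‖ ^ 2) : IsEDM Δ := by
  let K := Submodule.span ℝ (Set.range z)
  have : FiniteDimensional ℝ K := FiniteDimensional.span_of_finite ℝ (Set.finite_range z)
  -- The extra factor `ℝ` only serves to make the dimension positive.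
  let e := (stdOrthonormalBasis ℝ (WithLp 2 (K × ℝ))).repr
  refine ⟨Module.finrank ℝ (WithLp 2 (K × ℝ)), Module.finrank_pos,
    fun i => e (WithLp.toLp 2 (⟨z i, Submodule.subset_span ⟨i, rfl⟩⟩, 0)), fun i j => ?_⟩
  rw [h, ← map_sub, LinearIsometryEquiv.norm_map, ← WithLp.toLp_sub,
    WithLp.prod_norm_sq_eq_of_L2]
  simp

theorem IsEDM.add {m : ℕ} {Δ₁ Δ₂ : Matrix (Fin m) (Fin m) ℝ} (h₁ : IsEDM Δ₁)
    (h₂ : IsEDM Δ₂) : IsEDM (Δ₁ + Δ₂) := by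
  obtain ⟨s, -, z₁, hz₁⟩ := h₁
  obtain ⟨t, -, z₂, hz₂⟩ := h₂
  refine isEDM_of_norm_sub_sq (fun i => WithLp.toLp 2 (z₁ i, z₂ i)) fun i j => ?_
  rw [Matrix.add_apply, hz₁, hz₂, ← WithLp.toLp_sub, WithLp.prod_norm_sq_eq_of_L2]
  rfl

theorem IsEDM.smul {m : ℕ} {Δ : Matrix (Fin m) (Fin m) ℝ} (h : IsEDM Δ) {c : ℝ}
    (hc : 0 ≤ c) : IsEDM (c • Δ) := by
  obtain ⟨s, hs, z, hz⟩ := h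
  refine ⟨s, hs, fun i => √c • z i, fun i j => ?_⟩
  rw [Matrix.smul_apply, hz, ← smul_sub, norm_smul, mul_pow, Real.norm_eq_abs, sq_abs,
    Real.sq_sqrt hc, smul_eq_mul]

theorem isEDM_sq_sub {m : ℕ} (a : Fin m → ℝ) : IsEDM (of fun i j => (a i - a j) ^ 2) :=
  isEDM_of_norm_sub_sq a fun i j => by rw [of_apply, Real.norm_eq_abs, sq_abs]

theorem isEDM_ite_eq_zero_else_two {m : ℕ} :
    IsEDM (of fun i j : Fin m => if i = j then 0 else 2) := by
  refine isEDM_of_norm_sub_sq (fun i => EuclideanSpace.single i (1 : ℝ)) fun i j => ?_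
  rw [of_apply, @norm_sub_sq_real]
  split_ifs with hij <;> simp [EuclideanSpace.inner_single_left, hij] <;> norm_num

noncomputable def indicatorIoc (x y : ℝ) : Lp ℝ 2 (volume : Measure ℝ) :=
  indicatorConstLp 2 (measurableSet_Ioc (a := x) (b := y)) measure_Ioc_lt_top.ne 1

theorem indicatorIoc_add_indicatorIoc {x y z : ℝ} (hxy : x ≤ y) (hyz : y ≤ z) :
    indicatorIoc x y + indicatorIoc y z = indicatorIoc x z := by
  simp only [indicatorIoc, ← Set.Ioc_union_Ioc_eq_Ioc hxy hyz]
  rw [← indicatorConstLp_disjoint_union]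
  exact Set.Ioc_disjoint_Ioc_of_le le_rfl

theorem norm_indicatorIoc_sq {x y : ℝ} (hxy : x ≤ y) : ‖indicatorIoc x y‖ ^ 2 = y - x := by
  rw [indicatorIoc, norm_indicatorConstLp two_ne_zero ENNReal.ofNat_ne_top]
  simp only [norm_one, one_mul, Real.volume_real_Ioc_of_le hxy, ENNReal.toReal_ofNat]
  rw [← Real.rpow_natCast, ← Real.rpow_mul (sub_nonneg.2 hxy)]
  norm_num

theorem isEDM_abs_sub {m : ℕ} (a : Fin m → ℝ) : IsEDM (of fun i j => |a i - a j|) := by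
  obtain ⟨l, hl⟩ := (Set.finite_range a).bddBelow
  have hla : ∀ i, l ≤ a i := fun i => hl ⟨i, rfl⟩
  refine isEDM_of_norm_sub_sq (fun i => indicatorIoc l (a i)) fun i j => ?_
  rw [of_apply]
  wlog hij : a j ≤ a i generalizing i j
  · rw [abs_sub_comm, norm_sub_rev]; exact this j i (le_of_not_ge hij)
  rw [← indicatorIoc_add_indicatorIoc (hla j) hij, add_sub_cancel_left, norm_indicatorIoc_sq hij,
    abs_of_nonneg (sub_nonneg.2 hij)]

theorem isEDM_sq_abs_sub_add {m : ℕ} (a : Fin m → ℝ) {β : ℝ} (hβ : 0 ≤ β) :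
    IsEDM (of fun i j => if i = j then 0 else (|a i - a j| + β) ^ 2) := by
  have hsplit : (of fun i j => if i = j then 0 else (|a i - a j| + β) ^ 2) =
      of (fun i j => (a i - a j) ^ 2) + (2 * β) • of (fun i j => |a i - a j|) +
        (β ^ 2 / 2) • of (fun i j : Fin m => if i = j then 0 else 2) := by
    ext i j
    by_cases hij : i = j
    · simp [hij]
    · simp only [of_apply, Matrix.add_apply, Matrix.smul_apply, if_neg hij, smul_eq_mul]
      rw [← sq_abs (a i - a j)]
      ring
  rw [hsplit]
  exact ((isEDM_sq_sub a).add ((isEDM_abs_sub a).smul (by positivity))).add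
    (isEDM_ite_eq_zero_else_two.smul (by positivity))

theorem centeringMatrix_mulVec_one (k : ℕ) : centeringMatrix k *ᵥ 1 = 0 := by
  ext i
  rcases k.eq_zero_or_pos with rfl | hk
  · exact i.elim0
  · simp [centeringMatrix, mulVec, dotProduct, one_apply, hk.ne']

theorem det_centeringMatrix {k : ℕ} (hk : 0 < k) : (centeringMatrix k).det = 0 :=
  exists_mulVec_eq_zero_iff.mp
    ⟨1, fun h => one_ne_zero (congrFun h ⟨0, hk⟩), centeringMatrix_mulVec_one k⟩

theorem det_doubleCenter {k : ℕ} (hk : 0 < k) (C : Matrix (Fin k) (Fin k) ℝ) :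
    (doubleCenter C).det = 0 := by
  rw [doubleCenter, det_smul, det_mul, det_centeringMatrix hk, mul_zero, mul_zero]

theorem Matrix.IsHermitian.exists_eigenvalues_eq_zero_of_det_eq_zero {n : Type*} [Fintype n]
    [DecidableEq n] {A : Matrix n n ℝ} (hA : A.IsHermitian) (h : A.det = 0) :
    ∃ i, hA.eigenvalues i = 0 := by
  have hprod : ∏ i, hA.eigenvalues i = 0 := by
    exact_mod_cast hA.det_eq_prod_eigenvalues.symm.trans h
  simpa [Finset.prod_eq_zero_iff] using hprod

theorem stmt2_general (m : ℕ) (hm : 0 < m)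
    (a : Fin m → ℝ)
    (Δhalf : Matrix (Fin m) (Fin m) ℝ)
    (hHerm : (doubleCenter Δhalf).IsHermitian)
    (μ₀ : ℝ) (hμ₀ : μ₀ = ⨅ t, hHerm.eigenvalues t)
    (β : ℝ) (hβ : β ≥ -4 * μ₀)
    (Δ : Matrix (Fin m) (Fin m) ℝ)
    (hΔ : ∀ t u, Δ t u = if t = u then 0 else (|a t - a u| + β) ^ 2) :
    IsEDM Δ := by
  obtain ⟨t, ht⟩ := hHerm.exists_eigenvalues_eq_zero_of_det_eq_zero (det_doubleCenter hm Δhalf)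
  have hμ₀_nonpos : μ₀ ≤ 0 := hμ₀ ▸ ht ▸ ciInf_le (Set.finite_range _).bddBelow t
  have hΔ' : Δ = of fun i j => if i = j then 0 else (|a i - a j| + β) ^ 2 := ext hΔ
  exact hΔ' ▸ isEDM_sq_abs_sub_add a (by linarith)

theorem stmt2 (m : ℕ) (hm : 0 < m)
    (a : Fin m → ℝ) (ha : Function.Injective a)
    (Δhalf : Matrix (Fin m) (Fin m) ℝ)
    (hΔhalf : ∀ t u, Δhalf t u = |a t - a u|)
    (hHerm : (doubleCenter Δhalf).IsHermitian)
    (μ₀ : ℝ) (hμ₀ : μ₀ = ⨅ t, hHerm.eigenvalues t)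
    (β : ℝ) (hβ : β ≥ -4 * μ₀)
    (Δ : Matrix (Fin m) (Fin m) ℝ)
    (hΔ : ∀ t u, Δ t u = if t = u then 0 else (|a t - a u| + β) ^ 2) :
    IsEDM Δ :=
  stmt2_general m hm a Δhalf hHerm μ₀ hμ₀ β hβ Δ hΔ
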